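/- arXiv:2008.07793 — 2 statements merged into one kernel-verified Lean document; each statement's English description precedes it below -/
import Mathlib

section
/- (Equivalence of the LP relaxation of SYS-ILP with SYS-LP.) Consider the relaxation of SYS-ILP in which the integrality constraints y_{i,t} ∈ {0,1} are replaced by 0 ≤ y_{i,t} ≤ 1. Then the optimal value of this relaxed problem equals the optimal value V^R of SYS-LP. -/
open Finset

/-- Feasibility for SYS-LP. -/
def LPFeasible (N T : ℕ) (J M : ℕ → ℝ) (x : ℕ → ℕ → ℝ) : Prop :=
  (∀ i t, 0 ≤ x i t) ∧
  (∀ i ∈ Finset.Icc 1 N, (∑ t ∈ Finset.Icc 1 T, x i t) ≤ J i) ∧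
  (∀ t ∈ Finset.Icc 1 T, (∑ i ∈ Finset.Icc 1 N, x i t) ≤ M t)

/-- The SYS-LP objective `Σ_i Σ_t x_{i,t} F_{i,t}` with `F_{i,t} = U_{i,t}/J_i`. -/
noncomputable def LPObj (N T : ℕ) (J : ℕ → ℝ) (U : ℕ → ℕ → ℝ) (x : ℕ → ℕ → ℝ) : ℝ :=
  ∑ i ∈ Finset.Icc 1 N, ∑ t ∈ Finset.Icc 1 T, x i t * (U i t / J i)

/-- Feasibility for the LP relaxation of SYS-ILP, where `y_{i,t} ∈ {0,1}` is relaxed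
to `0 ≤ y_{i,t} ≤ 1`. -/
def RelFeasible (N T : ℕ) (J M : ℕ → ℝ) (x y : ℕ → ℕ → ℝ) : Prop :=
  (∀ i t, 0 ≤ x i t) ∧
  (∀ i ∈ Finset.Icc 1 N, ∀ t ∈ Finset.Icc 1 T, 0 ≤ y i t ∧ y i t ≤ 1) ∧
  (∀ i ∈ Finset.Icc 1 N, ∀ t ∈ Finset.Icc 1 T,
    y i t ≤ (∑ s ∈ Finset.Icc 1 t, x i s) / J i) ∧
  (∀ t ∈ Finset.Icc 1 T, (∑ i ∈ Finset.Icc 1 N, x i t) ≤ M t)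

/-- The SYS-ILP objective with `u_{i,t} = U_{i,t} − U_{i,t+1}`. -/
noncomputable def ILPObj (N T : ℕ) (U : ℕ → ℕ → ℝ) (y : ℕ → ℕ → ℝ) : ℝ :=
  ∑ t ∈ Finset.Icc 1 T, ∑ i ∈ Finset.Icc 1 N, (U i t - U i (t + 1)) * y i t

/-- Telescoping sum. -/
lemma telescope_sum (T : ℕ) (g : ℕ → ℝ) :
    ∑ t ∈ Finset.Icc 1 T, (g t - g (t - 1)) = g T - g 0 := by
  induction T with
  | zero => simp
  | succ T ih =>
    rw [Finset.sum_Icc_succ_top (by omega), ih]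
    simp only [Nat.add_sub_cancel]
    ring

/-- Abel summation. -/
lemma abel_sum (T : ℕ) (V a : ℕ → ℝ) (h0 : a 0 = 0) (hT : V (T + 1) = 0) :
    ∑ t ∈ Finset.Icc 1 T, V t * (a t - a (t - 1)) =
      ∑ t ∈ Finset.Icc 1 T, (V t - V (t + 1)) * a t := by
  have key : ∀ S : ℕ, ∑ t ∈ Finset.Icc 1 S, V t * (a t - a (t - 1)) =
      ∑ t ∈ Finset.Icc 1 S, (V t - V (t + 1)) * a t + V (S + 1) * a S := by
    intro S
    induction S with
    | zero => simp [h0]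
    | succ S ih =>
      rw [Finset.sum_Icc_succ_top (by omega), Finset.sum_Icc_succ_top (by omega), ih]
      simp only [Nat.add_sub_cancel]
      ring
  rw [key, hT]
  ring

/-- the optimal value of the LP relaxation of SYS-ILP equals the optimal
value `V^R` of SYS-LP. -/
theorem stmt12
    (N T : ℕ) (J M : ℕ → ℝ) (U : ℕ → ℕ → ℝ)
    (hJ : ∀ i ∈ Finset.Icc 1 N, 0 < J i)
    (hM : ∀ t ∈ Finset.Icc 1 T, 0 < M t)
    (hUnn : ∀ i ∈ Finset.Icc 1 N, ∀ t ∈ Finset.Icc 1 T, 0 ≤ U i t)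
    (hUmono : ∀ i ∈ Finset.Icc 1 N, ∀ t ∈ Finset.Icc 1 T, ∀ t', t ≤ t' → t' ≤ T →
      U i t' ≤ U i t)
    (hU0 : ∀ i ∈ Finset.Icc 1 N, U i (T + 1) = 0)
    (Vrel VR : ℝ)
    (hVrel : IsGreatest
      {v | ∃ x y, RelFeasible N T J M x y ∧ v = ILPObj N T U y} Vrel)
    (hVR : IsGreatest {v | ∃ x, LPFeasible N T J M x ∧ v = LPObj N T J U x} VR) :
    Vrel = VR := by
  obtain ⟨⟨x, y, ⟨hx0, hy01, hyS, hcap⟩, hVeq⟩, hVub⟩ := hVrel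
  obtain ⟨⟨z, ⟨hz0, hzJ, hzcap⟩, hReq⟩, hRub⟩ := hVR
  -- nonnegativity of the marginal utilities
  have hu : ∀ i ∈ Finset.Icc 1 N, ∀ t ∈ Finset.Icc 1 T, 0 ≤ U i t - U i (t + 1) := by
    intro i hi t ht
    have htT := (Finset.mem_Icc.mp ht).2
    rcases eq_or_lt_of_le htT with h | h
    · subst h
      rw [hU0 i hi]
      simpa using hUnn i hi t ht
    · have := hUmono i hi t ht (t + 1) (Nat.le_succ t) (by omega)
      linarith
  apply le_antisymm
  · -- Vrel ≤ VR : truncate x into an LP-feasible solution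
    set a : ℕ → ℕ → ℝ := fun i t => min (∑ s ∈ Finset.Icc 1 t, x i s) (J i) with ha
    set x' : ℕ → ℕ → ℝ := fun i t => a i t - a i (t - 1) with hx'
    have hsub : ∀ i : ℕ, ∀ t1 t2 : ℕ, t1 ≤ t2 →
        (∑ s ∈ Finset.Icc 1 t1, x i s) ≤ ∑ s ∈ Finset.Icc 1 t2, x i s := by
      intro i t1 t2 h
      exact Finset.sum_le_sum_of_subset_of_nonneg (Finset.Icc_subset_Icc le_rfl h)
        (fun s _ _ => hx0 i s)
    have ha0 : ∀ i ∈ Finset.Icc 1 N, a i 0 = 0 := by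
      intro i hi
      simp [ha, min_eq_left (hJ i hi).le]
    have hx'0 : ∀ i t, 0 ≤ x' i t := by
      intro i t
      have : a i (t - 1) ≤ a i t :=
        min_le_min (hsub i _ _ (Nat.sub_le t 1)) le_rfl
      exact sub_nonneg.mpr this
    have hx'le : ∀ i t, 1 ≤ t → x' i t ≤ x i t := by
      intro i t ht
      have hsplit : (∑ s ∈ Finset.Icc 1 t, x i s)
          = (∑ s ∈ Finset.Icc 1 (t - 1), x i s) + x i t := by
        obtain ⟨t', rfl⟩ : ∃ t', t = t' + 1 := ⟨t - 1, by omega⟩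
        rw [Finset.sum_Icc_succ_top (by omega)]
        simp
      have key : a i t ≤ a i (t - 1) + x i t := by
        simp only [ha]
        rw [hsplit]
        calc min ((∑ s ∈ Finset.Icc 1 (t - 1), x i s) + x i t) (J i)
            ≤ min ((∑ s ∈ Finset.Icc 1 (t - 1), x i s) + x i t) (J i + x i t) :=
              min_le_min le_rfl (le_add_of_nonneg_right (hx0 i t))
          _ = min (∑ s ∈ Finset.Icc 1 (t - 1), x i s) (J i) + x i t := by
              rw [min_add_add_right]
      have : x' i t = a i t - a i (t - 1) := rfl
      linarith
    have hfeas : LPFeasible N T J M x' := by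
      refine ⟨hx'0, ?_, ?_⟩
      · intro i hi
        have : ∑ t ∈ Finset.Icc 1 T, x' i t = a i T - a i 0 := telescope_sum T (a i)
        rw [this, ha0 i hi, sub_zero]
        exact min_le_right _ _
      · intro t ht
        calc ∑ i ∈ Finset.Icc 1 N, x' i t
            ≤ ∑ i ∈ Finset.Icc 1 N, x i t :=
              Finset.sum_le_sum (fun i _ => hx'le i t (Finset.mem_Icc.mp ht).1)
          _ ≤ M t := hcap t ht
    -- objective comparison
    have hobj : ILPObj N T U y ≤ LPObj N T J U x' := by
      unfold ILPObj LPObj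
      rw [Finset.sum_comm]
      apply Finset.sum_le_sum
      intro i hi
      have hJi := hJ i hi
      have key : ∑ t ∈ Finset.Icc 1 T, x' i t * (U i t / J i)
          = ∑ t ∈ Finset.Icc 1 T, (U i t - U i (t + 1)) * (a i t / J i) := by
        calc ∑ t ∈ Finset.Icc 1 T, x' i t * (U i t / J i)
            = ∑ t ∈ Finset.Icc 1 T, (U i t / J i) * (a i t - a i (t - 1)) := by
              refine Finset.sum_congr rfl (fun t _ => ?_)
              simp only [hx']
              ring
          _ = ∑ t ∈ Finset.Icc 1 T, (U i t / J i - U i (t + 1) / J i) * a i t :=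
              abel_sum T (fun t => U i t / J i) (a i) (ha0 i hi) (by simp [hU0 i hi])
          _ = ∑ t ∈ Finset.Icc 1 T, (U i t - U i (t + 1)) * (a i t / J i) := by
              refine Finset.sum_congr rfl (fun t _ => ?_)
              ring
      rw [key]
      apply Finset.sum_le_sum
      intro t ht
      have hyle : y i t ≤ a i t / J i := by
        rw [le_div_iff₀ hJi]
        refine le_min ?_ ?_
        · exact (le_div_iff₀ hJi).mp (hyS i hi t ht)
        · calc y i t * J i ≤ 1 * J i :=
              mul_le_mul_of_nonneg_right (hy01 i hi t ht).2 hJi.le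
            _ = J i := one_mul _
      exact mul_le_mul_of_nonneg_left hyle (hu i hi t ht)
    have : LPObj N T J U x' ≤ VR := hRub ⟨x', hfeas, rfl⟩
    calc Vrel = ILPObj N T U y := hVeq
      _ ≤ LPObj N T J U x' := hobj
      _ ≤ VR := this
  · -- VR ≤ Vrel : use fractional y from prefix sums of z
    set y' : ℕ → ℕ → ℝ := fun i t => (∑ s ∈ Finset.Icc 1 t, z i s) / J i with hy'
    have hsubz : ∀ i : ℕ, ∀ t1 t2 : ℕ, t1 ≤ t2 →
        (∑ s ∈ Finset.Icc 1 t1, z i s) ≤ ∑ s ∈ Finset.Icc 1 t2, z i s := by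
      intro i t1 t2 h
      exact Finset.sum_le_sum_of_subset_of_nonneg (Finset.Icc_subset_Icc le_rfl h)
        (fun s _ _ => hz0 i s)
    have hfeas : RelFeasible N T J M z y' := by
      refine ⟨hz0, ?_, ?_, hzcap⟩
      · intro i hi t ht
        have hJi := hJ i hi
        constructor
        · exact div_nonneg (Finset.sum_nonneg (fun s _ => hz0 i s)) hJi.le
        · rw [div_le_one hJi]
          exact le_trans (hsubz i t T (Finset.mem_Icc.mp ht).2) (hzJ i hi)
      · intro i hi t ht
        exact le_rfl
    have hobj : LPObj N T J U z = ILPObj N T U y' := by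
      unfold ILPObj LPObj
      rw [Finset.sum_comm (s := Finset.Icc 1 T)]
      refine Finset.sum_congr rfl (fun i hi => ?_)
      have hJi := hJ i hi
      calc ∑ t ∈ Finset.Icc 1 T, z i t * (U i t / J i)
          = ∑ t ∈ Finset.Icc 1 T, (U i t / J i) *
              ((∑ s ∈ Finset.Icc 1 t, z i s) - (∑ s ∈ Finset.Icc 1 (t - 1), z i s)) := by
            refine Finset.sum_congr rfl (fun t ht => ?_)
            have ht1 := (Finset.mem_Icc.mp ht).1
            have hsplit : (∑ s ∈ Finset.Icc 1 t, z i s)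
                = (∑ s ∈ Finset.Icc 1 (t - 1), z i s) + z i t := by
              obtain ⟨t', rfl⟩ : ∃ t', t = t' + 1 := ⟨t - 1, by omega⟩
              rw [Finset.sum_Icc_succ_top (by omega)]
              simp
            rw [hsplit]
            ring
        _ = ∑ t ∈ Finset.Icc 1 T, (U i t / J i - U i (t + 1) / J i) *
              (∑ s ∈ Finset.Icc 1 t, z i s) :=
            abel_sum T (fun t => U i t / J i)
              (fun t => ∑ s ∈ Finset.Icc 1 t, z i s) (by simp) (by simp [hU0 i hi])
        _ = ∑ t ∈ Finset.Icc 1 T, (U i t - U i (t + 1)) * y' i t := by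
            refine Finset.sum_congr rfl (fun t _ => ?_)
            simp only [hy']
            ring
    have : ILPObj N T U y' ≤ Vrel := hVub ⟨z, y', hfeas, rfl⟩
    calc VR = LPObj N T J U z := hReq
      _ = ILPObj N T U y' := hobj
      _ ≤ Vrel := this
end

section
/- (Per-tier rounding gap bound, from the proof of Theorem 1.) Let x^R be an optimal solution of SYS-LP, fix a tier t with Σ_{j=1}^N x^R_{j,t} = M_t, and let S_t := {i : 0 < x^R_{i,t} < J_i and Σ_{s=1}^t x^R_{i,s} < J_i}. For each i let T^R_i := min{s ∈ {1,…,T} : Σ_{r=1}^s x^R_{i,r} ≥ J_i} (with T^R_i := T+1 and F_{i,T+1} := 0 if no such s exists). If F_{i,t} > F_{i,T^R_i} for every i ∈ S_t, then Σ_{i ∈ S_t} (F_{i,t} − F_{i,T^R_i}) x^R_{i,t} ≤ (|S_t| · max_i J_i / M_t) · Σ_{j=1}^N F_{j,t} x^R_{j,t}. -/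
open Finset

/- The completion tier `min {s ∈ {1,…,T} : Σ_{r=1}^s g r ≥ Ji}`, taken to be `T+1`
if no such tier exists. -/
open Classical in
noncomputable def compTier (T : ℕ) (Ji : ℝ) (g : ℕ → ℝ) : ℕ :=
  if ∃ t ∈ Finset.Icc 1 T, Ji ≤ ∑ s ∈ Finset.Icc 1 t, g s then
    sInf {t | t ∈ Finset.Icc 1 T ∧ Ji ≤ ∑ s ∈ Finset.Icc 1 t, g s}
  else T + 1

/-- `F_{i,s} = U_{i,s}/J_i` for `s ≤ T`, extended by `F_{i,T+1} = 0`. -/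
noncomputable def Fext (T : ℕ) (Ji : ℝ) (Ui : ℕ → ℝ) (s : ℕ) : ℝ :=
  if s ≤ T then Ui s / Ji else 0

/-!
Let `i ∈ S_t` and let `j` be any user with `x_{j,t} > 0`. Optimality rules out two exchanges.
If `i` completes at a tier `c ≤ T`, then `c > t` and `x_{i,c} > 0`, and moving mass from
`(j,t), (i,c)` to `(i,t), (j,c)` shows `F_{i,t} - F_{i,c} ≤ F_{j,t} - F_{j,c} ≤ F_{j,t}`.
If `i` never completes, moving mass from `(j,t)` to `(i,t)` shows `F_{i,t} ≤ F_{j,t}`.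
Averaging `F_{i,t} - F_{i,T^R_i} ≤ F_{j,t}` with the weights `x_{j,t} / M_t` of the full tier
bounds each gap by `Σ_j F_{j,t} x_{j,t} / M_t`, and `x_{i,t} ≤ max_j J_j`.
-/

variable {N T : ℕ} {J M : ℕ → ℝ} {U : ℕ → ℕ → ℝ} {x d : ℕ → ℕ → ℝ}

noncomputable def lpObjₗ (N T : ℕ) (J : ℕ → ℝ) (U : ℕ → ℕ → ℝ) :
    (ℕ → ℕ → ℝ) →ₗ[ℝ] ℝ where
  toFun := LPObj N T J U
  map_add' x y := by simp only [LPObj, Pi.add_apply, add_mul, sum_add_distrib]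
  map_smul' c x := by
    simp only [LPObj, Pi.smul_apply, smul_eq_mul, mul_sum, mul_assoc, RingHom.id_apply]

lemma lpObjₗ_apply (N T : ℕ) (J : ℕ → ℝ) (U x : ℕ → ℕ → ℝ) :
    lpObjₗ N T J U x = LPObj N T J U x := rfl

lemma LPFeasible.add_smul {ε : ℝ} (hx : LPFeasible N T J M x)
    (hnn : ∀ a b, 0 ≤ x a b + ε * d a b)
    (hrow : ∀ a ∈ Icc 1 N, ε * ∑ b ∈ Icc 1 T, d a b ≤ J a - ∑ b ∈ Icc 1 T, x a b)
    (hcol : ∀ b ∈ Icc 1 T, ∑ a ∈ Icc 1 N, d a b = 0) :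
    LPFeasible N T J M (x + ε • d) := by
  obtain ⟨-, -, hcolx⟩ := hx
  refine ⟨hnn, fun a ha => ?_, fun b hb => ?_⟩
  · simp only [Pi.add_apply, Pi.smul_apply, smul_eq_mul, sum_add_distrib, ← mul_sum]
    linarith [hrow a ha]
  · simp only [Pi.add_apply, Pi.smul_apply, smul_eq_mul, sum_add_distrib, ← mul_sum, hcol b hb,
      mul_zero, add_zero]
    exact hcolx b hb

lemma lpObjₗ_nonpos_of_feasible_add_smul {ε : ℝ} (hε : 0 < ε)
    (hopt : ∀ x', LPFeasible N T J M x' → LPObj N T J U x' ≤ LPObj N T J U x)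
    (hd : LPFeasible N T J M (x + ε • d)) : lpObjₗ N T J U d ≤ 0 := by
  have h := hopt _ hd
  rw [← lpObjₗ_apply, ← lpObjₗ_apply, map_add, map_smul, smul_eq_mul] at h
  exact nonpos_of_mul_nonpos_right (by linarith) hε

def cell (i t : ℕ) : ℕ → ℕ → ℝ := fun a b => if a = i ∧ b = t then 1 else 0

lemma sum_cell_row (s : Finset ℕ) (i t a : ℕ) :
    ∑ b ∈ s, cell i t a b = if a = i ∧ t ∈ s then 1 else 0 := by
  by_cases h : a = i <;> simp [cell, h]

lemma sum_cell_col (s : Finset ℕ) (i t b : ℕ) :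
    ∑ a ∈ s, cell i t a b = if i ∈ s ∧ b = t then 1 else 0 := by
  by_cases h : b = t <;> simp [cell, h]

lemma LPObj_cell {i t : ℕ} (hi : i ∈ Icc 1 N) (ht : t ∈ Icc 1 T) :
    LPObj N T J U (cell i t) = U i t / J i := by
  simp [LPObj, cell, ite_and, hi, ht]

lemma exchange_le (hx : LPFeasible N T J M x)
    (hopt : ∀ x', LPFeasible N T J M x' → LPObj N T J U x' ≤ LPObj N T J U x)
    {i j t s : ℕ} (hi : i ∈ Icc 1 N) (hj : j ∈ Icc 1 N) (hij : i ≠ j)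
    (ht : t ∈ Icc 1 T) (hs : s ∈ Icc 1 T) (hts : t ≠ s)
    (hjt : 0 < x j t) (his : 0 < x i s) :
    U i t / J i - U i s / J i ≤ U j t / J j - U j s / J j := by
  set d := cell i t + cell j s - cell j t - cell i s
  set ε := min (x j t) (x i s)
  have hfeas : LPFeasible N T J M (x + ε • d) := by
    refine hx.add_smul (fun a b => ?_) (fun a ha => ?_) (fun b hb => ?_)
    · have hεjt := min_le_left (x j t) (x i s)
      have hεis := min_le_right (x j t) (x i s)
      have := hx.1 a b
      simp only [d, cell, Pi.add_apply, Pi.sub_apply]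
      split_ifs <;> grind
    · simp only [d, Pi.add_apply, Pi.sub_apply, sum_add_distrib, sum_sub_distrib, sum_cell_row]
      have := hx.2.1 a ha
      split_ifs <;> grind
    · simp only [d, Pi.add_apply, Pi.sub_apply, sum_add_distrib, sum_sub_distrib, sum_cell_col]
      split_ifs <;> grind
  have hd := lpObjₗ_nonpos_of_feasible_add_smul (lt_min hjt his) hopt hfeas
  simp only [d, map_add, map_sub, lpObjₗ_apply, LPObj_cell hi ht, LPObj_cell hi hs,
    LPObj_cell hj ht, LPObj_cell hj hs] at hd
  linarith

lemma transfer_le (hx : LPFeasible N T J M x)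
    (hopt : ∀ x', LPFeasible N T J M x' → LPObj N T J U x' ≤ LPObj N T J U x)
    {i j t : ℕ} (hi : i ∈ Icc 1 N) (hj : j ∈ Icc 1 N) (hij : i ≠ j) (ht : t ∈ Icc 1 T)
    (hjt : 0 < x j t) (hslack : ∑ s ∈ Icc 1 T, x i s < J i) :
    U i t / J i ≤ U j t / J j := by
  set d := cell i t - cell j t
  set ε := min (x j t) (J i - ∑ s ∈ Icc 1 T, x i s)
  have hε : 0 < ε := lt_min hjt (by linarith)
  have hεjt := min_le_left (x j t) (J i - ∑ s ∈ Icc 1 T, x i s)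
  have hεi := min_le_right (x j t) (J i - ∑ s ∈ Icc 1 T, x i s)
  have hfeas : LPFeasible N T J M (x + ε • d) := by
    refine hx.add_smul (fun a b => ?_) (fun a ha => ?_) (fun b hb => ?_)
    · have := hx.1 a b
      simp only [d, cell, Pi.sub_apply]
      split_ifs <;> grind
    · simp only [d, Pi.sub_apply, sum_sub_distrib, sum_cell_row]
      have := hx.2.1 a ha
      split_ifs <;> grind
    · simp only [d, Pi.sub_apply, sum_sub_distrib, sum_cell_col]
      split_ifs <;> grind
  have hd := lpObjₗ_nonpos_of_feasible_add_smul hε hopt hfeas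
  simp only [d, map_sub, lpObjₗ_apply, LPObj_cell hi ht, LPObj_cell hj ht] at hd
  linarith

section compTier

variable {T : ℕ} {Ji : ℝ} {g : ℕ → ℝ}

lemma compTier_spec (h : compTier T Ji g ≤ T) :
    compTier T Ji g ∈ Icc 1 T ∧ Ji ≤ ∑ r ∈ Icc 1 (compTier T Ji g), g r := by
  unfold compTier at h ⊢
  split_ifs at h ⊢ with hex
  · exact Nat.sInf_mem hex
  · omega

lemma sum_lt_of_lt_compTier {s : ℕ} (hs : s ∈ Icc 1 T) (h : s < compTier T Ji g) :
    ∑ r ∈ Icc 1 s, g r < Ji := by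
  unfold compTier at h
  split_ifs at h with hex
  · exact not_le.mp fun hle => Nat.notMem_of_lt_sInf h ⟨hs, hle⟩
  · push Not at hex
    exact hex s hs

lemma lt_compTier (hg : ∀ r, 0 ≤ g r) {t : ℕ} (ht : ∑ r ∈ Icc 1 t, g r < Ji)
    (h : compTier T Ji g ≤ T) : t < compTier T Ji g := by
  by_contra! hle
  have := (compTier_spec h).2
  have := sum_le_sum_of_subset_of_nonneg (Icc_subset_Icc_right (a := 1) hle) fun r _ _ => hg r
  linarith

lemma pos_at_compTier (hJ : 0 < Ji) (h : compTier T Ji g ≤ T) :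
    0 < g (compTier T Ji g) := by
  obtain ⟨hc, hge⟩ := compTier_spec h
  obtain ⟨hc1, hcT⟩ := mem_Icc.mp hc
  have hprev : ∑ r ∈ Icc 1 (compTier T Ji g - 1), g r < Ji := by
    rcases Nat.eq_zero_or_pos (compTier T Ji g - 1) with h0 | hpos
    · simpa [h0] using hJ
    · exact sum_lt_of_lt_compTier (T := T) (mem_Icc.mpr ⟨hpos, by omega⟩) (by omega)
  rw [← Nat.sub_add_cancel hc1, sum_Icc_succ_top (Nat.le_add_left 1 _)] at hge
  rw [← Nat.sub_add_cancel hc1]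
  linarith

end compTier

lemma one_le_compTier (T : ℕ) (Ji : ℝ) (g : ℕ → ℝ) : 1 ≤ compTier T Ji g := by
  by_cases h : compTier T Ji g ≤ T
  · exact (mem_Icc.mp (compTier_spec h).1).1
  · omega

lemma Fext_nonneg {T s : ℕ} {Ji : ℝ} {Ui : ℕ → ℝ} (hU : ∀ r ∈ Icc 1 T, 0 ≤ Ui r)
    (hJ : 0 ≤ Ji) (hs : 1 ≤ s) : 0 ≤ Fext T Ji Ui s := by
  unfold Fext
  split_ifs with h
  · exact div_nonneg (hU s (mem_Icc.mpr ⟨hs, h⟩)) hJ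
  · exact le_rfl

noncomputable def roundingGap (T : ℕ) (Ji : ℝ) (Ui g : ℕ → ℝ) (t : ℕ) : ℝ :=
  Fext T Ji Ui t - Fext T Ji Ui (compTier T Ji g)

section optimal

variable (hx : LPFeasible N T J M x)
  (hopt : ∀ x', LPFeasible N T J M x' → LPObj N T J U x' ≤ LPObj N T J U x)
  (hU : ∀ i ∈ Icc 1 N, ∀ t ∈ Icc 1 T, 0 ≤ U i t) (hJ : ∀ i ∈ Icc 1 N, 0 < J i)
include hx hopt hU hJ

lemma roundingGap_le {i j t : ℕ} (hi : i ∈ Icc 1 N) (hj : j ∈ Icc 1 N) (ht : t ∈ Icc 1 T)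
    (hslack : ∑ s ∈ Icc 1 t, x i s < J i) (hjt : 0 < x j t) :
    roundingGap T (J i) (U i) (x i) t ≤ Fext T (J j) (U j) t := by
  have hFt : ∀ k, Fext T (J k) (U k) t = U k t / J k := fun k => if_pos (mem_Icc.mp ht).2
  unfold roundingGap
  obtain rfl | hij := eq_or_ne j i
  · have := Fext_nonneg (hU j hj) (hJ j hj).le (one_le_compTier T (J j) (x j))
    linarith
  rw [hFt, hFt]
  rcases le_or_gt (compTier T (J i) (x i)) T with hc | hc
  · have hexch := exchange_le hx hopt hi hj hij.symm ht (compTier_spec hc).1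
      (lt_compTier (hx.1 i) hslack hc).ne hjt (pos_at_compTier (hJ i hi) hc)
    have := div_nonneg (hU j hj _ (compTier_spec hc).1) (hJ j hj).le
    rw [Fext, if_pos hc]
    linarith
  · have hT : T ∈ Icc 1 T := mem_Icc.mpr ⟨(mem_Icc.mp ht).1.trans (mem_Icc.mp ht).2, le_rfl⟩
    have := transfer_le hx hopt hi hj hij.symm ht hjt (sum_lt_of_lt_compTier hT hc)
    rw [Fext, if_neg hc.not_ge]
    linarith

lemma roundingGap_mul_le {i t : ℕ} (hi : i ∈ Icc 1 N) (ht : t ∈ Icc 1 T)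
    (hslack : ∑ s ∈ Icc 1 t, x i s < J i) (hfull : ∑ j ∈ Icc 1 N, x j t = M t) :
    roundingGap T (J i) (U i) (x i) t * M t ≤
      ∑ j ∈ Icc 1 N, Fext T (J j) (U j) t * x j t := by
  rw [← hfull, mul_sum]
  refine sum_le_sum fun j hj => ?_
  rcases (hx.1 j t).eq_or_lt with h0 | hpos
  · simp [← h0]
  · exact mul_le_mul_of_nonneg_right (roundingGap_le hx hopt hU hJ hi hj ht hslack hpos) hpos.le

end optimal

open Classical in
theorem stmt18_general
    (N T : ℕ) (hN : 1 ≤ N) (J M : ℕ → ℝ) (U : ℕ → ℕ → ℝ)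
    (hJ : ∀ i ∈ Finset.Icc 1 N, 0 < J i)
    (hM : ∀ t ∈ Finset.Icc 1 T, 0 < M t)
    (hUnn : ∀ i ∈ Finset.Icc 1 N, ∀ t ∈ Finset.Icc 1 T, 0 ≤ U i t)
    (x : ℕ → ℕ → ℝ)
    (hfeas : LPFeasible N T J M x)
    (hopt : ∀ x', LPFeasible N T J M x' → LPObj N T J U x' ≤ LPObj N T J U x)
    (t : ℕ) (ht : t ∈ Finset.Icc 1 T)
    (hfull : (∑ j ∈ Finset.Icc 1 N, x j t) = M t) :
    ∑ i ∈ (Finset.Icc 1 N).filter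
        (fun i => 0 < x i t ∧ x i t < J i ∧ (∑ s ∈ Finset.Icc 1 t, x i s) < J i),
      (Fext T (J i) (U i) t - Fext T (J i) (U i) (compTier T (J i) (x i))) * x i t
    ≤ ((((Finset.Icc 1 N).filter
          (fun i => 0 < x i t ∧ x i t < J i ∧
            (∑ s ∈ Finset.Icc 1 t, x i s) < J i)).card : ℝ) *
        ((Finset.Icc 1 N).sup' (Finset.nonempty_Icc.mpr hN) J) / M t) *
      ∑ j ∈ Finset.Icc 1 N, Fext T (J j) (U j) t * x j t := by
  set S := (Icc 1 N).filter
    (fun i => 0 < x i t ∧ x i t < J i ∧ (∑ s ∈ Icc 1 t, x i s) < J i)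
  set Jmax := (Icc 1 N).sup' (nonempty_Icc.mpr hN) J
  set F := ∑ j ∈ Icc 1 N, Fext T (J j) (U j) t * x j t
  have hF : 0 ≤ F / M t := div_nonneg (sum_nonneg fun j hj =>
    mul_nonneg (Fext_nonneg (hUnn j hj) (hJ j hj).le (mem_Icc.mp ht).1) (hfeas.1 j t))
    (hM t ht).le
  calc ∑ i ∈ S, roundingGap T (J i) (U i) (x i) t * x i t
      ≤ ∑ _i ∈ S, F / M t * Jmax := sum_le_sum fun i hi => ?_
    _ = S.card * Jmax / M t * F := by rw [sum_const, nsmul_eq_mul]; ring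
  obtain ⟨hiN, hxpos, hxJ, hslack⟩ := mem_filter.mp hi
  have hgap : roundingGap T (J i) (U i) (x i) t ≤ F / M t := (le_div_iff₀ (hM t ht)).mpr
    (roundingGap_mul_le hfeas hopt hUnn hJ hiN ht hslack hfull)
  calc roundingGap T (J i) (U i) (x i) t * x i t ≤ F / M t * x i t :=
        mul_le_mul_of_nonneg_right hgap hxpos.le
    _ ≤ F / M t * Jmax := mul_le_mul_of_nonneg_left (hxJ.le.trans (le_sup' J hiN)) hF

open Classical in
/-- per-tier rounding gap bound, from the proof of Theorem 1:
for an optimal SYS-LP solution `x^R`, a fully used tier `t` and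
`S_t = {i : 0 < x^R_{i,t} < J_i and Σ_{s=1}^t x^R_{i,s} < J_i}`, if
`F_{i,t} > F_{i,T^R_i}` for every `i ∈ S_t`, then
`Σ_{i ∈ S_t} (F_{i,t} − F_{i,T^R_i}) x^R_{i,t}
  ≤ (|S_t|·max_i J_i / M_t)·Σ_j F_{j,t} x^R_{j,t}`. -/
theorem stmt18
    (N T : ℕ) (hN : 1 ≤ N) (J M : ℕ → ℝ) (U : ℕ → ℕ → ℝ)
    (hJ : ∀ i ∈ Finset.Icc 1 N, 0 < J i)
    (hM : ∀ t ∈ Finset.Icc 1 T, 0 < M t)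
    (hUnn : ∀ i ∈ Finset.Icc 1 N, ∀ t ∈ Finset.Icc 1 T, 0 ≤ U i t)
    (hUmono : ∀ i ∈ Finset.Icc 1 N, ∀ t ∈ Finset.Icc 1 T, ∀ t', t ≤ t' → t' ≤ T →
      U i t' ≤ U i t)
    (x : ℕ → ℕ → ℝ)
    (hfeas : LPFeasible N T J M x)
    (hopt : ∀ x', LPFeasible N T J M x' → LPObj N T J U x' ≤ LPObj N T J U x)
    (t : ℕ) (ht : t ∈ Finset.Icc 1 T)
    (hfull : (∑ j ∈ Finset.Icc 1 N, x j t) = M t)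
    (hgap : ∀ i ∈ (Finset.Icc 1 N).filter
        (fun i => 0 < x i t ∧ x i t < J i ∧ (∑ s ∈ Finset.Icc 1 t, x i s) < J i),
      Fext T (J i) (U i) (compTier T (J i) (x i)) < Fext T (J i) (U i) t) :
    ∑ i ∈ (Finset.Icc 1 N).filter
        (fun i => 0 < x i t ∧ x i t < J i ∧ (∑ s ∈ Finset.Icc 1 t, x i s) < J i),
      (Fext T (J i) (U i) t - Fext T (J i) (U i) (compTier T (J i) (x i))) * x i t
    ≤ ((((Finset.Icc 1 N).filter
          (fun i => 0 < x i t ∧ x i t < J i ∧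
            (∑ s ∈ Finset.Icc 1 t, x i s) < J i)).card : ℝ) *
        ((Finset.Icc 1 N).sup' (Finset.nonempty_Icc.mpr hN) J) / M t) *
      ∑ j ∈ Finset.Icc 1 N, Fext T (J j) (U j) t * x j t :=
  stmt18_general N T hN J M U hJ hM hUnn x hfeas hopt t ht hfull
end
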